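/- arXiv:1109.1251 — 4 statements merged into one kernel-verified Lean document; each statement's English description precedes it below -/
import Mathlib

section
/- Two words w and w' over Σ are trace-equivalent with respect to the distribution {Σ_i, i ∈ I} if and only if w' can be obtained from w by a finite sequence of adjacent transpositions of independent letters; formally, w ∼ w' if and only if (w, w') belongs to the reflexive-transitive closure of the relation R defined by R(u ++ [σ, σ'] ++ v, u ++ [σ', σ] ++ v) for all words u, v and all independent pairs (σ, σ'). -/
/-- The projection of a word `w` onto the sub-alphabet `Sig i`:
erase all letters not in `Sig i`. -/
def proj {A I : Type*} [DecidableEq A] (Sig : I → Set A)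
    [∀ i, DecidablePred (· ∈ Sig i)] (i : I) (w : List A) : List A :=
  w.filter fun a => decide (a ∈ Sig i)

/-- Trace equivalence: two words are trace-equivalent iff all their projections agree. -/
def traceEquiv {A I : Type*} [DecidableEq A] (Sig : I → Set A)
    [∀ i, DecidablePred (· ∈ Sig i)] (w w' : List A) : Prop :=
  ∀ i, proj Sig i w = proj Sig i w'

/-- The trace-equivalence class `[w]` of a word `w`. -/
def traceClass {A I : Type*} [DecidableEq A] (Sig : I → Set A)
    [∀ i, DecidablePred (· ∈ Sig i)] (w : List A) : Set (List A) :=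
  {w' | traceEquiv Sig w w'}

/-- A language `L` is trace-closed if `w ∈ L` implies `[w] ⊆ L`. -/
def traceClosed {A I : Type*} [DecidableEq A] (Sig : I → Set A)
    [∀ i, DecidablePred (· ∈ Sig i)] (L : Set (List A)) : Prop :=
  ∀ w ∈ L, traceClass Sig w ⊆ L

/-- The product `∥_{i∈I} L i` of a family of languages `L i` over `Sig i`. -/
def prodLang {A I : Type*} [DecidableEq A] (Sig : I → Set A)
    [∀ i, DecidablePred (· ∈ Sig i)] (L : I → Set (List A)) : Set (List A) :=
  {w | ∀ i, proj Sig i w ∈ L i}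

/-- Letters `σ, σ'` are independent w.r.t. the distribution if no `Sig i` contains both. -/
def indep {A I : Type*} (Sig : I → Set A) (σ σ' : A) : Prop :=
  ¬ ∃ i, σ ∈ Sig i ∧ σ' ∈ Sig i

/-- One adjacent transposition of an independent pair of letters. -/
def swapRel {A I : Type*} (Sig : I → Set A) (x y : List A) : Prop :=
  ∃ u v σ σ', indep Sig σ σ' ∧ x = u ++ [σ, σ'] ++ v ∧ y = u ++ [σ', σ] ++ v

/-!
Swapping adjacent independent letters preserves every projection, since at most one of the
two letters survives in each of them. Conversely, if `a :: t ∼ w'`, write `w' = u ++ a :: v` at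
the first occurrence of `a` (which exists because `a` lies in some `Sig i`). Every letter `b` of
`u` is independent of `a`: otherwise, projecting onto a `Sig i` containing both, the projection
of `u` would be a nonempty prefix before the first `a`, whereas the projection of `a :: t`
starts with `a`. So `a` can be swapped to the front of `w'`, and induction applies to
`t ∼ u ++ v`.
-/

section

variable {A I : Type*} {Sig : I → Set A}

theorem indep.symm {a b : A} (h : indep Sig a b) : indep Sig b a :=
  fun ⟨i, hb, ha⟩ => h ⟨i, ha, hb⟩

instance : Std.Symm (swapRel Sig) where
  symm _ _ := fun ⟨u, v, σ, σ', hind, hx, hy⟩ => ⟨u, v, σ', σ, hind.symm, hy, hx⟩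

theorem swapRel.cons {x y : List A} (a : A) (h : swapRel Sig x y) :
    swapRel Sig (a :: x) (a :: y) :=
  let ⟨u, v, σ, σ', hind, hx, hy⟩ := h
  ⟨a :: u, v, σ, σ', hind, by simp [hx], by simp [hy]⟩

theorem reflTransGen_swapRel_cons {x y : List A} (a : A)
    (h : Relation.ReflTransGen (swapRel Sig) x y) :
    Relation.ReflTransGen (swapRel Sig) (a :: x) (a :: y) :=
  h.lift (a :: ·) fun _ _ => swapRel.cons a

theorem reflTransGen_swapRel_append_cons {a : A} {u v : List A}
    (hind : ∀ b ∈ u, indep Sig b a) :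
    Relation.ReflTransGen (swapRel Sig) (u ++ a :: v) (a :: (u ++ v)) := by
  induction u with
  | nil => exact .refl
  | cons b u ih =>
    have hb : indep Sig b a := hind b List.mem_cons_self
    have hu : ∀ c ∈ u, indep Sig c a := fun c hc => hind c (List.mem_cons_of_mem b hc)
    exact (reflTransGen_swapRel_cons b (ih hu)).tail ⟨[], u ++ v, b, a, hb, rfl, rfl⟩

end

section

variable {A I : Type*} [DecidableEq A] {Sig : I → Set A} [∀ i, DecidablePred (· ∈ Sig i)]

theorem traceEquiv.symm {w w' : List A} (h : traceEquiv Sig w w') : traceEquiv Sig w' w :=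
  fun i => (h i).symm

theorem traceEquiv.trans {w w' w'' : List A} (h : traceEquiv Sig w w')
    (h' : traceEquiv Sig w' w'') : traceEquiv Sig w w'' :=
  fun i => (h i).trans (h' i)

theorem traceEquiv.of_cons {a : A} {w w' : List A} (h : traceEquiv Sig (a :: w) (a :: w')) :
    traceEquiv Sig w w' := by
  intro i
  by_cases ha : a ∈ Sig i <;> simpa [proj, List.filter_cons, ha] using h i

theorem traceEquiv_of_swapRel {x y : List A} (h : swapRel Sig x y) : traceEquiv Sig x y := by
  obtain ⟨u, v, σ, σ', hind, rfl, rfl⟩ := h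
  intro i
  simp only [proj, List.filter_append]
  by_cases h : σ ∈ Sig i <;> by_cases h' : σ' ∈ Sig i
  · exact absurd ⟨i, h, h'⟩ hind
  all_goals simp [h, h']

theorem traceEquiv_of_reflTransGen {x y : List A}
    (h : Relation.ReflTransGen (swapRel Sig) x y) : traceEquiv Sig x y := by
  induction h with
  | refl => exact fun _ => rfl
  | tail _ hstep ih => exact ih.trans (traceEquiv_of_swapRel hstep)

theorem traceEquiv.mem {a : A} {w w' : List A} (hcov : ⋃ i, Sig i = Set.univ)
    (h : traceEquiv Sig w w') (ha : a ∈ w) : a ∈ w' := by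
  obtain ⟨i, hai⟩ := Set.iUnion_eq_univ_iff.mp hcov a
  have : a ∈ proj Sig i w := by simp [proj, ha, hai]
  rw [h i] at this
  exact List.mem_of_mem_filter this

theorem traceEquiv.eq_nil {w : List A} (hcov : ⋃ i, Sig i = Set.univ)
    (h : traceEquiv Sig [] w) : w = [] :=
  List.eq_nil_iff_forall_not_mem.mpr fun _ hb => List.not_mem_nil (h.symm.mem hcov hb)

theorem indep_of_traceEquiv_cons_append_cons {a b : A} {t u v : List A}
    (h : traceEquiv Sig (a :: t) (u ++ a :: v)) (hau : a ∉ u) (hb : b ∈ u) : indep Sig b a := by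
  rintro ⟨i, hbi, hai⟩
  have hi : a :: proj Sig i t = proj Sig i u ++ a :: proj Sig i v := by
    simpa [proj, List.filter_cons, hai] using h i
  rcases List.cons_eq_append_iff.mp hi with ⟨hnil, -⟩ | ⟨_, hcons, -⟩
  · have : b ∈ proj Sig i u := by simp [proj, hb, hbi]
    simp [hnil] at this
  · have : a ∈ proj Sig i u := by simp [hcons]
    exact hau (List.mem_of_mem_filter this)

end

/-- Two words are trace-equivalent iff one can be obtained from the other by a finite
sequence of adjacent transpositions of independent letters. -/
theorem traceEquiv_iff_reflTransGen_swapRel {A I : Type*} [DecidableEq A] (Sig : I → Set A)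
    [∀ i, DecidablePred (· ∈ Sig i)] (hcov : (⋃ i, Sig i) = Set.univ)
    (w w' : List A) :
    traceEquiv Sig w w' ↔ Relation.ReflTransGen (swapRel Sig) w w' := by
  refine ⟨fun h => ?_, traceEquiv_of_reflTransGen⟩
  induction w generalizing w' with
  | nil => rw [h.eq_nil hcov]
  | cons a t ih =>
    obtain ⟨u, v, rfl, hau⟩ := List.eq_append_cons_of_mem (h.mem hcov List.mem_cons_self)
    have hmove : Relation.ReflTransGen (swapRel Sig) (u ++ a :: v) (a :: (u ++ v)) :=
      reflTransGen_swapRel_append_cons fun _ hb => indep_of_traceEquiv_cons_append_cons h hau hb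
    have ht : traceEquiv Sig t (u ++ v) := (h.trans (traceEquiv_of_reflTransGen hmove)).of_cons
    exact (reflTransGen_swapRel_cons a (ih _ ht)).trans (Std.Symm.symm _ _ hmove)
end

section
/- Let B be a nondeterministic finite automaton over alphabet Σ with state set Q, initial states Q_in, transition function δ : Q → Σ → Set Q, and accepting states F, and let S ⊆ Σ. Define the ε-NFA B^ε over the alphabet S with the same states Q, initial states Q_in, and accepting states F, whose transition function sends (q, σ) for σ ∈ S to δ(q, σ) and sends (q, ε) to ⋃_{σ ∉ S} δ(q, σ). Then the language accepted by B^ε equals the projection of the language of B onto S: L(B^ε) = { List.filter (· ∈ S) w | w ∈ L(B) }. -/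
/-- The ε-NFA `B^ε` over the sub-alphabet `S ⊆ A`, obtained from the NFA `B` over `A`:
it has the same states, initial states and accepting states as `B`; on a letter `σ ∈ S`
it takes the transitions of `B` on `σ`, and its ε-transitions from a state `q` go to
`⋃_{σ ∉ S} δ(q, σ)`. -/
def projEpsNFA {A Q : Type*} (S : Set A) (B : NFA A Q) : εNFA {a : A // a ∈ S} Q where
  step := fun q o =>
    match o with
    | some σ => B.step q σ.val
    | none => ⋃ σ ∈ {σ : A | σ ∉ S}, B.step q σ
  start := B.start
  accept := B.accept

/-!
Projection onto `S` is the letter-wise relabelling `f : A → Option S` that keeps the letters of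
`S` and turns the others into `ε`, and `B^ε` is `B` with every transition relabelled by `f`.
A run of `B^ε` on a word over `Option S` is therefore literally a run of `B`, through the same
states, on a word `u` with `u.map f` equal to it; so `B^ε` accepts exactly the words
`u.filterMap f` with `u` accepted by `B`, and after the inclusion `S → A` these are the
words `u.filter (· ∈ S)`.
-/

namespace εNFA

variable {α β σ : Type*} {M : εNFA β σ} {B : NFA α σ} {f : α → Option β}

theorem isPath_iff_of_step_eq (hM : ∀ s o, M.step s o = ⋃ (a) (_ : f a = o), B.step s a)
    {s t : σ} {x : List (Option β)} :
    M.IsPath s t x ↔ ∃ u : List α, u.map f = x ∧ t ∈ B.evalFrom {s} u := by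
  constructor
  · intro h
    induction h with
    | nil s => exact ⟨[], rfl, by simp⟩
    | cons s' s t o x hstep _ ih =>
      obtain ⟨u, rfl, hu⟩ := ih
      rw [hM, Set.mem_iUnion₂] at hstep
      obtain ⟨a, rfl, ha⟩ := hstep
      refine ⟨a :: u, rfl, ?_⟩
      rw [NFA.evalFrom_cons, NFA.stepSet_singleton, NFA.mem_evalFrom_iff_exists]
      exact ⟨s', ha, hu⟩
  · rintro ⟨u, rfl, hu⟩
    induction u generalizing s with
    | nil => simpa [eq_comm] using hu
    | cons a u ih =>
      rw [NFA.evalFrom_cons, NFA.stepSet_singleton, NFA.mem_evalFrom_iff_exists] at hu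
      obtain ⟨s', hs', hu⟩ := hu
      exact .cons s' s t _ _ (by rw [hM]; exact Set.mem_iUnion₂.2 ⟨a, rfl, hs'⟩) (ih hu)

theorem mem_accepts_iff_of_step_eq (hM : ∀ s o, M.step s o = ⋃ (a) (_ : f a = o), B.step s a)
    (hstart : M.start = B.start) (haccept : M.accept = B.accept) {x : List β} :
    x ∈ M.accepts ↔ ∃ u ∈ B.accepts, u.filterMap f = x := by
  have reduceOption_map_eq_filterMap (u : List α) : (u.map f).reduceOption = u.filterMap f :=
    List.filterMap_map
  simp_rw [mem_accepts_iff_exists_path, isPath_iff_of_step_eq hM, hstart, haccept,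
    NFA.accepts_iff_exists_path, ← NFA.mem_evalFrom_iff_nonempty_path]
  constructor
  · rintro ⟨s, t, _, hs, ht, rfl, u, rfl, hu⟩
    exact ⟨u, ⟨s, hs, t, ht, hu⟩, (reduceOption_map_eq_filterMap u).symm⟩
  · rintro ⟨u, ⟨s, hs, t, ht, hu⟩, rfl⟩
    exact ⟨s, t, _, hs, ht, reduceOption_map_eq_filterMap u, u, rfl, hu⟩

end εNFA

section Projection

variable {A Q : Type*} (S : Set A) [DecidablePred (· ∈ S)]

def projLetter (a : A) : Option S :=
  if h : a ∈ S then some ⟨a, h⟩ else none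

theorem projEpsNFA_step (B : NFA A Q) (q : Q) (o : Option S) :
    (projEpsNFA S B).step q o = ⋃ (a) (_ : projLetter S a = o), B.step q a := by
  ext q'
  cases o <;> simp [projEpsNFA, projLetter, Subtype.ext_iff]

theorem map_val_filterMap_projLetter (u : List A) :
    (u.filterMap (projLetter S)).map Subtype.val = u.filter (· ∈ S) := by
  rw [List.map_filterMap, ← List.filterMap_eq_filter]
  congr 1
  ext a
  by_cases h : a ∈ S <;> simp [projLetter, h]

theorem mem_projEpsNFA_accepts_iff (B : NFA A Q) {x : List S} :
    x ∈ (projEpsNFA S B).accepts ↔ ∃ u ∈ B.accepts, u.filterMap (projLetter S) = x :=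
  εNFA.mem_accepts_iff_of_step_eq (projEpsNFA_step S B) rfl rfl

end Projection

theorem projEpsNFA_accepts_general {A Q : Type*} (S : Set A)
    [DecidablePred (· ∈ S)] (B : NFA A Q) :
    (fun w : List {a : A // a ∈ S} => w.map Subtype.val) '' (projEpsNFA S B).accepts
      = (fun w : List A => w.filter fun a => decide (a ∈ S)) '' B.accepts := by
  ext w
  constructor
  · rintro ⟨x, hx, rfl⟩
    obtain ⟨u, hu, rfl⟩ := (mem_projEpsNFA_accepts_iff S B).1 hx
    exact ⟨u, hu, (map_val_filterMap_projLetter S u).symm⟩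
  · rintro ⟨u, hu, rfl⟩
    exact ⟨_, (mem_projEpsNFA_accepts_iff S B).2 ⟨u, hu, rfl⟩, map_val_filterMap_projLetter S u⟩

/-- The language accepted by `B^ε` equals the projection of the language of `B` onto `S`
(identifying words over the sub-alphabet `S` with words over `A` via the inclusion). -/
theorem projEpsNFA_accepts {A Q : Type*} [DecidableEq A] (S : Set A)
    [DecidablePred (· ∈ S)] (B : NFA A Q) :
    (fun w : List {a : A // a ∈ S} => w.map Subtype.val) '' (projEpsNFA S B).accepts
      = (fun w : List A => w.filter fun a => decide (a ∈ S)) '' B.accepts :=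
  projEpsNFA_accepts_general S B
end

section
/- Let T = (S, s₀, →, Σ, h) be a transition system and let B be an NFA over Σ with states Q, initial states Q_in, transition function δ, and accepting states F. Define the product NFA E over Σ with state set (Option S) × Q, initial states {(none, q) | q ∈ Q_in}, accepting states {(some s, q) | s ∈ S, q ∈ F}, and transitions: from (none, q) on letter h(s₀) to (some s₀, q') for every q' ∈ δ(q, h(s₀)); and from (some s, q) on letter h(s') to (some s', q') whenever s → s' and q' ∈ δ(q, h(s')). Then a word w is accepted by E if and only if w is accepted by B and there exists a finite trajectory s(0) s(1) … s(n) of T with s(0) = s₀, s(k) → s(k+1) for all 0 ≤ k < n, and w = [h(s(0)), h(s(1)), …, h(s(n))]. -/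
/-!
Reading its first letter, the product moves each start state `(none, q)` to `(some s₀, q')`;
from then on it runs `T` and `B` in lockstep, the letter read being the label of the new
`T`-state. Hence from `{some s} ×ˢ P` it accepts exactly the words accepted by `B` from `P`
that label a path of `T` leaving `s`, which is proved by induction on the word.
-/

/-- The product automaton `E = T ⊗ B` between a transition system
`T = (S, s₀, tr, A, h)` (with a dummy `Start` state, encoded as `none`) and an NFA `B`
over `A`. From `(none, q)` it can move on letter `h s₀` to `(some s₀, q')` for any
`q' ∈ δ(q, h s₀)`; from `(some s, q)` it can move on letter `h s'` to `(some s', q')`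
whenever `tr s s'` and `q' ∈ δ(q, h s')`. -/
def productNFA {A S Q : Type*} (s₀ : S) (tr : S → S → Prop) (h : S → A)
    (B : NFA A Q) : NFA A (Option S × Q) where
  step := fun p a =>
    match p with
    | (none, q) =>
        {p' | ∃ q', p' = (some s₀, q') ∧ a = h s₀ ∧ q' ∈ B.step q (h s₀)}
    | (some s, q) =>
        {p' | ∃ s' q', p' = (some s', q') ∧ tr s s' ∧ a = h s' ∧ q' ∈ B.step q (h s')}
  start := {p | ∃ q ∈ B.start, p = (none, q)}
  accept := {p | ∃ s q, q ∈ B.accept ∧ p = (some s, q)}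

theorem List.exists_isChain_cons_map_eq_cons_iff {α β : Type*} {R : α → α → Prop} {f : α → β}
    {a : α} {b : β} {w : List β} :
    (∃ l, (a :: l).IsChain R ∧ b :: w = l.map f) ↔
      ∃ a', R a a' ∧ b = f a' ∧ ∃ l, (a' :: l).IsChain R ∧ w = l.map f := by
  constructor
  · rintro ⟨_ | ⟨a', l⟩, hc, hw⟩
    · simp at hw
    · obtain ⟨rfl, rfl⟩ := List.cons_eq_cons.mp hw
      obtain ⟨hR, hc⟩ := List.isChain_cons_cons.mp hc
      exact ⟨a', hR, rfl, l, hc, rfl⟩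
  · rintro ⟨a', hR, rfl, l, hc, rfl⟩
    exact ⟨a' :: l, List.isChain_cons_cons.mpr ⟨hR, hc⟩, rfl⟩

theorem NFA.mem_acceptsFrom_iUnion {α σ : Type*} {M : NFA α σ} {ι : Sort*} {S : ι → Set σ}
    {w : List α} : w ∈ M.acceptsFrom (⋃ i, S i) ↔ ∃ i, w ∈ M.acceptsFrom (S i) := by
  rw [NFA.acceptsFrom_iUnion]
  exact Set.mem_iUnion

namespace productNFA

variable {A S Q : Type*} {s₀ : S} {tr : S → S → Prop} {h : S → A} {B : NFA A Q}

theorem stepSet_start (a : A) :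
    (productNFA s₀ tr h B).stepSet (productNFA s₀ tr h B).start a =
      ⋃ (_ : a = h s₀), {some s₀} ×ˢ B.stepSet B.start a := by
  ext ⟨_ | s, q⟩ <;> simp +contextual [NFA.stepSet, productNFA]

theorem stepSet_some_prod (s : S) (P : Set Q) (a : A) :
    (productNFA s₀ tr h B).stepSet ({some s} ×ˢ P) a =
      ⋃ (t : S) (_ : tr s t ∧ a = h t), {some t} ×ˢ B.stepSet P a := by
  ext ⟨_ | t, q⟩ <;> simp [NFA.mem_stepSet, productNFA]
  grind

theorem mem_acceptsFrom_some_prod {s : S} {P : Set Q} {w : List A} :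
    w ∈ (productNFA s₀ tr h B).acceptsFrom ({some s} ×ˢ P) ↔
      w ∈ B.acceptsFrom P ∧ ∃ l, (s :: l).IsChain tr ∧ w = l.map h := by
  induction w generalizing s P with
  | nil => simp [productNFA]
  | cons a w ih =>
    simp only [NFA.cons_mem_acceptsFrom, stepSet_some_prod, NFA.mem_acceptsFrom_iUnion, ih,
      List.exists_isChain_cons_map_eq_cons_iff]
    exact ⟨fun ⟨t, ⟨htr, ha⟩, hw, hl⟩ => ⟨hw, t, htr, ha, hl⟩,
      fun ⟨hw, t, htr, ha, hl⟩ => ⟨t, ⟨htr, ha⟩, hw, hl⟩⟩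

end productNFA

theorem productNFA_accepts_general {A S Q : Type*} (s₀ : S)
    (tr : S → S → Prop) (h : S → A) (B : NFA A Q) (w : List A) :
    w ∈ (productNFA s₀ tr h B).accepts ↔
      w ∈ B.accepts ∧
        ∃ rest : List S, List.Chain tr s₀ rest ∧ w = (s₀ :: rest).map h := by
  cases w with
  | nil => simp [NFA.accepts_eq_acceptsFrom_start, productNFA]
  | cons a w =>
    simp only [NFA.accepts_eq_acceptsFrom_start, NFA.cons_mem_acceptsFrom,
      productNFA.stepSet_start, NFA.mem_acceptsFrom_iUnion, productNFA.mem_acceptsFrom_some_prod,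
      List.map_cons, List.cons.injEq]
    exact ⟨fun ⟨ha, hw, l, hc, hl⟩ => ⟨hw, l, hc, ha, hl⟩,
      fun ⟨hw, l, hc, ha, hl⟩ => ⟨ha, hw, l, hc, hl⟩⟩

/-- A word `w` is accepted by the product automaton `E = T ⊗ B` iff `w` is accepted by `B`
and there is a finite trajectory `s(0) s(1) … s(n)` of `T` (i.e. `s(0) = s₀` and
`s(k) → s(k+1)` for all `k`) generating `w`, i.e. `w = [h (s 0), …, h (s n)]`. -/
theorem productNFA_accepts {A S Q : Type*} [DecidableEq A] (s₀ : S)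
    (tr : S → S → Prop) (h : S → A) (B : NFA A Q) (w : List A) :
    w ∈ (productNFA s₀ tr h B).accepts ↔
      w ∈ B.accepts ∧
        ∃ rest : List S, List.Chain tr s₀ rest ∧ w = (s₀ :: rest).map h :=
  productNFA_accepts_general s₀ tr h B w
end

section
/- Let I be a finite index set, {Σ_i ⊆ Σ, i ∈ I} a distribution of Σ, and for each i ∈ I let E_i be an NFA with states Q_i, initial states Q_in_i, transition function δ_i : Q_i → Σ → Set Q_i, and accepting states F_i, such that δ_i(q, σ) = ∅ whenever σ ∉ Σ_i. Define the synchronous product NFA P over Σ with state set ∏_{i∈I} Q_i, initial states ∏_{i∈I} Q_in_i, accepting states ∏_{i∈I} F_i, and transitions: q' ∈ δ_P(q, σ) iff for every i with σ ∈ Σ_i one has q'(i) ∈ δ_i(q(i), σ), and for every i with σ ∉ Σ_i one has q'(i) = q(i). Then the language of P equals the product of the languages of the components: L(P) = ∥_{i∈I} L(E_i) = {w : List Σ | ∀ i ∈ I, w ↾ Σ_i ∈ L(E_i)}. -/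
/-- The synchronous product `P = ∥_{i∈I} E i` of a family of NFAs `E i` over the
common alphabet `A`: its states are tuples of component states; on a letter `σ`,
the components `i` with `σ ∈ Sig i` move according to `E i` while the others stay put. -/
def syncProd {A I : Type*} (Sig : I → Set A) {Q : I → Type*}
    (E : ∀ i, NFA A (Q i)) : NFA A (∀ i, Q i) where
  step := fun q σ =>
    {q' | ∀ i, (σ ∈ Sig i → q' i ∈ (E i).step (q i) σ) ∧ (σ ∉ Sig i → q' i = q i)}
  start := {q | ∀ i, q i ∈ (E i).start}
  accept := {q | ∀ i, q i ∈ (E i).accept}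

/-!
Product state sets are invariant under the synchronous product: on a letter `a`, component `i`
runs `E i` along `[a] ↾ Sig i`, which is `[a]` or `[]`. Hence the states reachable by `w` from a
product `∏ S i` are exactly `∏ (states of E i reachable by w ↾ Sig i from S i)`, and acceptance
factors componentwise by choosing an accepting run for each component.
-/

open Set

section

variable {A I : Type*} (Sig : I → Set A) {Q : I → Type*} (E : ∀ i, NFA A (Q i))

lemma syncProd_start : (syncProd Sig E).start = univ.pi fun i => (E i).start := by
  ext; simp [syncProd]

lemma syncProd_accept : (syncProd Sig E).accept = univ.pi fun i => (E i).accept := by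
  ext; simp [syncProd]

variable [DecidableEq A] [∀ i, DecidablePred (· ∈ Sig i)]

lemma syncProd_step (q : ∀ i, Q i) (a : A) :
    (syncProd Sig E).step q a = univ.pi fun i => (E i).evalFrom {q i} (proj Sig i [a]) := by
  ext q'
  simp only [syncProd, mem_ofPred_eq, mem_univ_pi]
  refine forall_congr' fun i => ?_
  by_cases ha : a ∈ Sig i <;> simp [ha, proj]

lemma syncProd_stepSet_univ_pi (S : ∀ i, Set (Q i)) (a : A) :
    (syncProd Sig E).stepSet (univ.pi S) a
      = univ.pi fun i => (E i).evalFrom (S i) (proj Sig i [a]) := by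
  simp only [NFA.stepSet, syncProd_step]
  rw [biUnion_univ_pi S fun i s => (E i).evalFrom {s} (proj Sig i [a])]
  simp only [← NFA.evalFrom_eq_biUnion_singleton]

lemma syncProd_evalFrom_univ_pi (S : ∀ i, Set (Q i)) (w : List A) :
    (syncProd Sig E).evalFrom (univ.pi S) w
      = univ.pi fun i => (E i).evalFrom (S i) (proj Sig i w) := by
  induction w generalizing S with
  | nil => rfl
  | cons a w ih =>
    simp only [NFA.evalFrom_cons, syncProd_stepSet_univ_pi, ih, ← NFA.evalFrom_append, proj,
      ← List.filter_append, List.singleton_append]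

end

theorem syncProd_accepts_general {A I : Type*} [DecidableEq A] (Sig : I → Set A)
    [∀ i, DecidablePred (· ∈ Sig i)]
    {Q : I → Type*} (E : ∀ i, NFA A (Q i)) :
    (syncProd Sig E).accepts
      = {w : List A | ∀ i, proj Sig i w ∈ (E i).accepts} := by
  ext w
  simp only [NFA.mem_accepts, syncProd_start, syncProd_accept, syncProd_evalFrom_univ_pi,
    mem_univ_pi]
  constructor
  · rintro ⟨q, hacc, hrun⟩ i
    exact ⟨q i, hacc i, hrun i⟩
  · intro h
    choose q hacc hrun using h
    exact ⟨q, hacc, hrun⟩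

/-- If `I` is finite, `{Sig i, i ∈ I}` is a distribution of the alphabet, and each
component NFA `E i` only has transitions on letters of `Sig i`, then the language of the
synchronous product equals the product of the component languages:
`L(P) = {w | ∀ i, w ↾ Sig i ∈ L(E i)}`. -/
theorem syncProd_accepts {A I : Type*} [DecidableEq A] [Fintype I] (Sig : I → Set A)
    [∀ i, DecidablePred (· ∈ Sig i)] (hcov : (⋃ i, Sig i) = Set.univ)
    {Q : I → Type*} (E : ∀ i, NFA A (Q i))
    (hstep : ∀ i q σ, σ ∉ Sig i → (E i).step q σ = ∅) :
    (syncProd Sig E).accepts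
      = {w : List A | ∀ i, proj Sig i w ∈ (E i).accepts} :=
  syncProd_accepts_general Sig E
end
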